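/- Define d_7(n) by Π_{t≥1}(1-q^{7t})/(1-q^t) = Σ_{n≥0} d_7(n) q^n. Then d_7(9n+5) ≡ 0 (mod 7) for all n ≥ 0. -/

import Mathlib

/-!
Modulo 7, `∏ (1 - q^{7t}) ≡ ∏ (1 - q^t)^7`, so `d_7(N) ≡ [q^N] (q;q)_∞^6`. By Jacobi's identity
`(q;q)_∞^3 = ∑_{j ≥ 0} (-1)^j (2j+1) q^{T_j}` with `T_j = j(j+1)/2`, the coefficient of `q^N` in
`(q;q)_∞^6` vanishes unless `N = T_j + T_k`, i.e. `8N + 2 = (2j+1)^2 + (2k+1)^2`. For `N = 9n + 5`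
the left side is `6 (mod 9)`, which is not a sum of two squares modulo 9.

Jacobi's identity is proved modulo `q^n` from the finite triple product
`∏_{k<n} (1 + q^{k+1} z)(z + q^k) = ∑_m [2n, m]_q q^{T(m-n)} z^m`. Its derivative at `z = -1` is
`± (q;q)_n (q;q)_{n-1}`; on the other side, the Gaussian binomials `[2n, m]_q` agree with the
central one `[2n, n]_q` to `q`-adic order at least `n - |m - n|`, which leaves
`[2n, n]_q ∑_{j<n} (-1)^j (2j+1) q^{T_j}` modulo `q^n`. Multiplying by `(q;q)_n^2` and using
`[2n, n]_q (q;q)_n^2 = (q;q)_{2n} ≡ (q;q)_{n-1} (mod q^n)` gives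
`(q;q)_n^3 ≡ ∑_{j<n} (-1)^j (2j+1) q^{T_j} (mod q^n)`.
-/

open Finset PowerSeries

def triangle (k : ℤ) : ℕ := (k * (k + 1) / 2).toNat

theorem two_mul_triangle (k : ℤ) : 2 * (triangle k : ℤ) = k * (k + 1) := by
  have hev : 2 ∣ k * (k + 1) := (Int.even_mul_succ_self k).two_dvd
  have hnn : 0 ≤ k * (k + 1) := by rcases le_or_gt 0 k with h | h <;> nlinarith
  rw [triangle, Int.toNat_of_nonneg (Int.ediv_nonneg hnn (by norm_num)), Int.mul_ediv_cancel' hev]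

theorem triangle_add_one (k : ℤ) : (triangle (k + 1) : ℤ) = triangle k + k + 1 := by
  linarith [two_mul_triangle k, two_mul_triangle (k + 1)]

theorem triangle_neg_sub_one (k : ℤ) : triangle (-k - 1) = triangle k := by
  rw [triangle, triangle]
  ring_nf

theorem le_triangle (k : ℤ) : k ≤ triangle k := by
  nlinarith [two_mul_triangle k]

theorem neg_sub_one_le_triangle (k : ℤ) : -k - 1 ≤ triangle k := by
  nlinarith [two_mul_triangle k]

theorem triangle_natCast_sub_succ_succ (m n : ℕ) :
    triangle (((m + 1 : ℕ) : ℤ) - (n + 1 : ℕ)) = triangle ((m : ℤ) - n) := by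
  push_cast
  ring_nf

theorem triangle_natCast_succ_sub_add (m n : ℕ) :
    triangle (((m + 1 : ℕ) : ℤ) - n) + n = triangle ((m : ℤ) - n) + m + 1 := by
  have h := triangle_add_one ((m : ℤ) - n)
  rw [show (m : ℤ) - n + 1 = ((m + 1 : ℕ) : ℤ) - n by push_cast; ring] at h
  omega

theorem triangle_add_triangle_ne (j k : ℤ) (n : ℕ) : triangle j + triangle k ≠ 9 * n + 5 := by
  intro h
  have hsum : (2 * j + 1) ^ 2 + (2 * k + 1) ^ 2 = 72 * (n : ℤ) + 42 := by
    have h' : (triangle j : ℤ) + triangle k = 9 * n + 5 := by exact_mod_cast h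
    linear_combination 8 * h' - 4 * two_mul_triangle j - 4 * two_mul_triangle k
  have hmod := congrArg (Int.cast : ℤ → ZMod 9) hsum
  push_cast at hmod
  reduce_mod_char at hmod
  have hsq : ∀ x y : ZMod 9, x ^ 2 + y ^ 2 ≠ 6 := by decide
  exact hsq _ _ hmod

section QAnalogues

variable {R : Type*} [CommRing R] (q : R)

def qBinom : ℕ → ℕ → R
  | _, 0 => 1
  | 0, _ + 1 => 0
  | n + 1, k + 1 => qBinom n k + q ^ (k + 1) * qBinom n (k + 1)

@[simp] theorem qBinom_zero_right (n : ℕ) : qBinom q n 0 = 1 := by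
  cases n <;> rfl

@[simp] theorem qBinom_zero_succ (k : ℕ) : qBinom q 0 (k + 1) = 0 := rfl

theorem qBinom_succ_succ (n k : ℕ) :
    qBinom q (n + 1) (k + 1) = qBinom q n k + q ^ (k + 1) * qBinom q n (k + 1) := rfl

theorem qBinom_eq_zero_of_lt {n k : ℕ} (h : n < k) : qBinom q n k = 0 := by
  induction n generalizing k with
  | zero => obtain ⟨k, rfl⟩ := Nat.exists_eq_succ_of_ne_zero h.ne'; rfl
  | succ n ih =>
    obtain ⟨k, rfl⟩ := Nat.exists_eq_succ_of_ne_zero (Nat.ne_zero_of_lt h)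
    rw [qBinom_succ_succ, ih (by omega), ih (by omega), mul_zero, add_zero]

@[simp] theorem qBinom_self (n : ℕ) : qBinom q n n = 1 := by
  induction n with
  | zero => rfl
  | succ n ih =>
    rw [qBinom_succ_succ, ih, qBinom_eq_zero_of_lt q n.lt_succ_self, mul_zero, add_zero]

theorem qBinom_succ_succ' (n k : ℕ) :
    qBinom q (n + 1) (k + 1) = qBinom q n (k + 1) + q ^ (n - k) * qBinom q n k := by
  induction n generalizing k with
  | zero => cases k <;> simp [qBinom_succ_succ]
  | succ n ih =>
    rcases Nat.lt_or_ge (n + 1) k with hnk | hkn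
    · simp [qBinom_eq_zero_of_lt q (show n + 1 + 1 < k + 1 by omega),
        qBinom_eq_zero_of_lt q (show n + 1 < k + 1 by omega), qBinom_eq_zero_of_lt q hnk]
    rcases hkn.eq_or_lt with rfl | hkn
    · simp [qBinom_eq_zero_of_lt q (show n + 1 < n + 1 + 1 by omega)]
    cases k with
    | zero =>
      have h := ih 0
      simp only [qBinom_succ_succ, qBinom_zero_right, Nat.sub_zero, zero_add, pow_one] at h ⊢
      linear_combination q * h
    | succ j =>
      obtain ⟨i, rfl⟩ : ∃ i, n = j + 1 + i := ⟨n - (j + 1), by omega⟩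
      have h₁ := ih j
      have h₂ := ih (j + 1)
      rw [show j + 1 + i - j = i + 1 by omega, qBinom_succ_succ q (j + 1 + i) j] at h₁
      rw [show j + 1 + i - (j + 1) = i by omega, qBinom_succ_succ q (j + 1 + i) (j + 1)] at h₂
      rw [show j + 1 + i + 1 - (j + 1) = i + 1 by omega, qBinom_succ_succ (n := j + 1 + i + 1),
        qBinom_succ_succ q (j + 1 + i) j, qBinom_succ_succ q (j + 1 + i) (j + 1)]
      linear_combination h₁ + q ^ (j + 2) * h₂

theorem qBinom_succ_right_sub (n k : ℕ) : qBinom q n (k + 1) - qBinom q n k =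
    q ^ (k + 1) * qBinom q n (k + 1) - q ^ (n - k) * qBinom q n k := by
  linear_combination qBinom_succ_succ q n k - qBinom_succ_succ' q n k

theorem pow_dvd_qBinom_sub {n b c e : ℕ} (hbc : b ≤ c)
    (he : ∀ i ∈ Ico b c, e ≤ i + 1 ∧ e ≤ n - i) :
    q ^ e ∣ qBinom q n c - qBinom q n b := by
  rw [← sum_Ico_sub (qBinom q n) hbc]
  refine dvd_sum fun i hi => ?_
  rw [qBinom_succ_right_sub]
  exact dvd_sub ((pow_dvd_pow q (he i hi).1).mul_right _) ((pow_dvd_pow q (he i hi).2).mul_right _)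

theorem qBinom_add_two_add_two (n k : ℕ) :
    qBinom q (n + 2) (k + 2) = q ^ (k + 2) * qBinom q n (k + 2) +
      (1 + q ^ (n + 1)) * qBinom q n (k + 1) + q ^ (n - k) * qBinom q n k := by
  have h : q ^ (k + 2) * q ^ (n - (k + 1)) * qBinom q n (k + 1) =
      q ^ (n + 1) * qBinom q n (k + 1) := by
    rcases le_or_gt (k + 1) n with hk | hk
    · rw [← pow_add, show k + 2 + (n - (k + 1)) = n + 1 by omega]
    · simp [qBinom_eq_zero_of_lt q hk]
  rw [qBinom_succ_succ, qBinom_succ_succ', qBinom_succ_succ']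
  linear_combination h

def qPochhammer (n : ℕ) : R := ∏ t ∈ Icc 1 n, (1 - q ^ t)

@[simp] theorem qPochhammer_zero : qPochhammer q 0 = 1 := rfl

theorem qPochhammer_succ (n : ℕ) :
    qPochhammer q (n + 1) = qPochhammer q n * (1 - q ^ (n + 1)) :=
  prod_Icc_succ_top (by omega) _

theorem qPochhammer_eq_prod_range (n : ℕ) :
    qPochhammer q n = ∏ k ∈ range n, (1 - q ^ (k + 1)) := by
  induction n with
  | zero => rfl
  | succ n ih => rw [qPochhammer_succ, ih, prod_range_succ]

theorem pow_dvd_qPochhammer_sub {n m : ℕ} (h : n ≤ m) :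
    q ^ (n + 1) ∣ qPochhammer q m - qPochhammer q n := by
  induction m, h using Nat.le_induction with
  | base => simp
  | succ m hnm ih =>
    rw [qPochhammer_succ, show qPochhammer q m * (1 - q ^ (m + 1)) - qPochhammer q n =
      (qPochhammer q m - qPochhammer q n) - q ^ (m + 1) * qPochhammer q m by ring]
    exact dvd_sub ih ((pow_dvd_pow q (by omega)).mul_right _)

theorem qBinom_add_mul_qPochhammer (k l : ℕ) :
    qBinom q (k + l) k * (qPochhammer q k * qPochhammer q l) = qPochhammer q (k + l) := by
  induction k generalizing l with
  | zero => simp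
  | succ k ihk =>
    induction l with
    | zero => simp
    | succ l ihl =>
      have hk := ihk (l + 1)
      rw [qPochhammer_succ q l] at hk
      rw [show k + 1 + l = k + (l + 1) by omega, qPochhammer_succ q k] at ihl
      rw [show k + 1 + (l + 1) = k + (l + 1) + 1 by omega, qBinom_succ_succ,
        qPochhammer_succ q (k + (l + 1)), qPochhammer_succ q k, qPochhammer_succ q l]
      linear_combination (1 - q ^ (k + 1)) * hk + q ^ (k + 1) * (1 - q ^ (l + 1)) * ihl

theorem pow_dvd_pow_triangle_mul_qBinom_sub_central {n m : ℕ} (hm : m ≤ 2 * n) :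
    q ^ n ∣ q ^ triangle ((m : ℤ) - n) * (qBinom q (2 * n) m - qBinom q (2 * n) n) := by
  have h₁ := le_triangle ((m : ℤ) - n)
  have h₂ := neg_sub_one_le_triangle ((m : ℤ) - n)
  rcases le_total n m with h | h
  · have hd := pow_dvd_qBinom_sub q (n := 2 * n) (e := 2 * n - m) h fun i hi => by
      have := mem_Ico.mp hi; omega
    calc q ^ n ∣ q ^ (triangle ((m : ℤ) - n) + (2 * n - m)) := pow_dvd_pow q (by omega)
      _ = _ := pow_add ..
      _ ∣ _ := mul_dvd_mul_left _ hd
  · have hd := pow_dvd_qBinom_sub q (n := 2 * n) (e := m + 1) h fun i hi => by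
      have := mem_Ico.mp hi; omega
    calc q ^ n ∣ q ^ (triangle ((m : ℤ) - n) + (m + 1)) := pow_dvd_pow q (by omega)
      _ = _ := pow_add ..
      _ ∣ _ := mul_dvd_mul_left _ (dvd_sub_comm.mp hd)

/-- `z^n ∏_{k<n} (1 + q^{k+1} z)(1 + q^k z⁻¹)`, the finite Jacobi triple product. -/
noncomputable def tripleProductPoly (n : ℕ) : Polynomial R :=
  ∏ k ∈ range n,
    (1 + Polynomial.C (q ^ (k + 1)) * Polynomial.X) * (Polynomial.X + Polynomial.C (q ^ k))

theorem coeff_tripleProductPoly (n m : ℕ) :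
    (tripleProductPoly q n).coeff m = qBinom q (2 * n) m * q ^ triangle ((m : ℤ) - n) := by
  induction n generalizing m with
  | zero => cases m <;> simp [tripleProductPoly, Polynomial.coeff_one, triangle]
  | succ n ih =>
    have hF : tripleProductPoly q (n + 1) = tripleProductPoly q n * Polynomial.C (q ^ n)
        + tripleProductPoly q n * Polynomial.C (1 + q ^ (2 * n + 1)) * Polynomial.X
        + tripleProductPoly q n * Polynomial.C (q ^ (n + 1)) * Polynomial.X ^ 2 := by
      rw [show 2 * n + 1 = (n + 1) + n by ring, pow_add, map_add, map_one, map_mul,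
        tripleProductPoly, prod_range_succ, ← tripleProductPoly]
      ring
    rw [hF, show 2 * (n + 1) = 2 * n + 2 by ring]
    rcases m with _ | _ | k <;>
      simp only [Polynomial.coeff_add, Polynomial.coeff_mul_C, Polynomial.coeff_mul_X_pow',
        Polynomial.coeff_mul_X_zero, Polynomial.coeff_mul_X, ih]
    · have h := triangle_natCast_succ_sub_add 0 (n + 1)
      rw [triangle_natCast_sub_succ_succ] at h
      rw [if_neg (by omega), qBinom_zero_right, qBinom_zero_right, one_mul, one_mul, add_zero,
        add_zero, mul_comm, ← pow_add]
      exact congrArg _ (by omega)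
    · have h := triangle_natCast_succ_sub_add 0 n
      have hpow : q ^ triangle (((0 + 1 : ℕ) : ℤ) - n) * q ^ n =
          q * q ^ triangle ((0 : ℕ) - (n : ℤ)) := by
        rw [← pow_add, ← pow_succ']
        exact congrArg _ (by omega)
      have h₁ := qBinom_succ_succ q (2 * n + 1) 0
      have h₂ := qBinom_succ_succ' q (2 * n) 0
      rw [if_neg (by omega), triangle_natCast_sub_succ_succ]
      simp only [qBinom_zero_right, Nat.sub_zero, zero_add, pow_one] at h₁ h₂ hpow ⊢
      linear_combination qBinom q (2 * n) 1 * hpow -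
        q ^ triangle ((0 : ℕ) - (n : ℤ)) * (h₁ + q * h₂)
    · rw [if_pos (by omega), show k + 1 + 1 - 2 = k by omega, triangle_natCast_sub_succ_succ,
        qBinom_add_two_add_two]
      rcases le_or_gt k (2 * n) with hk | hk
      · have h₁ := triangle_natCast_succ_sub_add (k + 1) n
        have h₂ := triangle_natCast_succ_sub_add k n
        have hpow₁ : q ^ triangle (((k + 1 + 1 : ℕ) : ℤ) - n) * q ^ n =
            q ^ (k + 2) * q ^ triangle (((k + 1 : ℕ) : ℤ) - n) := by
          rw [← pow_add, ← pow_add]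
          exact congrArg _ (by omega)
        have hpow₂ : q ^ triangle ((k : ℤ) - n) * q ^ (n + 1) =
            q ^ (2 * n - k) * q ^ triangle (((k + 1 : ℕ) : ℤ) - n) := by
          rw [← pow_add, ← pow_add]
          exact congrArg _ (by omega)
        linear_combination qBinom q (2 * n) (k + 2) * hpow₁ + qBinom q (2 * n) k * hpow₂
      · simp [qBinom_eq_zero_of_lt q hk, qBinom_eq_zero_of_lt q (show 2 * n < k + 1 by omega),
          qBinom_eq_zero_of_lt q (show 2 * n < k + 2 by omega)]

theorem natDegree_tripleProductPoly_le (n : ℕ) : (tripleProductPoly q n).natDegree ≤ 2 * n :=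
  Polynomial.natDegree_le_iff_coeff_eq_zero.mpr fun m hm => by
    rw [coeff_tripleProductPoly, qBinom_eq_zero_of_lt q hm, zero_mul]

theorem eval_neg_one_derivative_tripleProductPoly (n : ℕ) :
    (Polynomial.derivative (tripleProductPoly q n)).eval (-1) =
      -∑ m ∈ range (2 * n + 1),
        (-1) ^ m * (m : R) * (qBinom q (2 * n) m * q ^ triangle ((m : ℤ) - n)) := by
  rw [Polynomial.derivative_eval, Polynomial.sum_over_range' _ (fun _ => by simp) _
    (Nat.lt_succ_of_le (natDegree_tripleProductPoly_le q n)), ← sum_neg_distrib]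
  refine sum_congr rfl fun m _ => ?_
  rw [coeff_tripleProductPoly]
  rcases m with _ | m
  · simp
  · rw [Nat.add_sub_cancel, pow_succ]
    ring

theorem eval_neg_one_derivative_tripleProductPoly_succ (n : ℕ) :
    (Polynomial.derivative (tripleProductPoly q (n + 1))).eval (-1) =
      (-1) ^ n * (qPochhammer q (n + 1) * qPochhammer q n) := by
  have hsplit : tripleProductPoly q (n + 1) =
      (∏ k ∈ range (n + 1), (1 + Polynomial.C (q ^ (k + 1)) * Polynomial.X)) *
      (∏ k ∈ range n, (Polynomial.X + Polynomial.C (q ^ (k + 1)))) * (Polynomial.X + 1) := by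
    rw [tripleProductPoly, prod_mul_distrib,
      prod_range_succ' (fun k => Polynomial.X + Polynomial.C (q ^ k)), pow_zero, map_one,
      mul_assoc]
  have hfactor : ∀ k : ℕ, (-1 : R) + q ^ (k + 1) = -(1 - q ^ (k + 1)) := fun k => by ring
  rw [hsplit, Polynomial.derivative_mul]
  simp only [Polynomial.derivative_add, Polynomial.derivative_X, Polynomial.derivative_one,
    add_zero, mul_one, Polynomial.eval_add, Polynomial.eval_mul, Polynomial.eval_prod, Polynomial.eval_X,
    Polynomial.eval_C, Polynomial.eval_one, mul_neg, neg_add_cancel, mul_zero, zero_add,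
    qPochhammer_eq_prod_range, hfactor, ← sub_eq_add_neg, prod_neg, card_range]
  ring

def jacobiCubeSum (n : ℕ) : R := ∑ j ∈ range n, (-1) ^ j * (2 * j + 1) * q ^ triangle j

theorem sum_range_neg_one_pow_mul_pow_triangle (n : ℕ) :
    ∑ m ∈ range (2 * n + 1), (-1) ^ m * (m : R) * q ^ triangle ((m : ℤ) - n) =
      (-1) ^ n * jacobiCubeSum q n + 2 * n * q ^ triangle n := by
  -- pair `m = n + j` with `m = n - 1 - j`: both terms carry `q ^ T_j`
  rw [sum_range_succ, two_mul, sum_range_add, ← sum_range_reflect,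
    ← sum_add_distrib, jacobiCubeSum, mul_sum]
  congr 1
  · refine sum_congr rfl fun j hj => ?_
    obtain ⟨i, rfl⟩ : ∃ i, n = j + 1 + i := ⟨n - (j + 1), by have := mem_range.mp hj; omega⟩
    rw [show j + 1 + i - 1 - j = i by omega,
      show ((i : ℕ) : ℤ) - ((j + 1 + i : ℕ) : ℤ) = -j - 1 by push_cast; ring, triangle_neg_sub_one,
      show (((j + 1 + i + j : ℕ) : ℤ) - ((j + 1 + i : ℕ) : ℤ)) = j by push_cast; ring]
    have hsq : ((-1 : R) ^ j) ^ 2 = 1 := by rw [← pow_mul, pow_mul', neg_one_sq, one_pow]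
    push_cast
    linear_combination (-(-1) ^ i * (i : R) * q ^ triangle j) * hsq
  · rw [show ((n + n : ℕ) : ℤ) - n = n by push_cast; ring, ← two_mul, pow_mul, neg_one_sq, one_pow,
      one_mul]
    push_cast
    ring

theorem pow_dvd_qPochhammer_mul_sub_qBinom_mul_jacobiCubeSum (n : ℕ) :
    q ^ (n + 1) ∣ qPochhammer q (n + 1) * qPochhammer q n -
      qBinom q (2 * (n + 1)) (n + 1) * jacobiCubeSum q (n + 1) := by
  set c := qBinom q (2 * (n + 1)) (n + 1)
  set S₁ := ∑ m ∈ range (2 * (n + 1) + 1), (-1) ^ m * (m : R) *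
    (qBinom q (2 * (n + 1)) m * q ^ triangle ((m : ℤ) - (n + 1 : ℕ)))
  set S₀ := ∑ m ∈ range (2 * (n + 1) + 1),
    (-1) ^ m * (m : R) * q ^ triangle ((m : ℤ) - (n + 1 : ℕ))
  have hderiv : (-1) ^ n * (qPochhammer q (n + 1) * qPochhammer q n) = -S₁ :=
    (eval_neg_one_derivative_tripleProductPoly_succ q n).symm.trans
      (eval_neg_one_derivative_tripleProductPoly q (n + 1))
  have hsum := sum_range_neg_one_pow_mul_pow_triangle q (n + 1)
  have hsq : ((-1 : R) ^ n) ^ 2 = 1 := by rw [← pow_mul, pow_mul', neg_one_sq, one_pow]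
  have hcentral : q ^ (n + 1) ∣ S₁ - c * S₀ := by
    rw [mul_sum, ← sum_sub_distrib]
    refine dvd_sum fun m hm => ?_
    convert (pow_dvd_pow_triangle_mul_qBinom_sub_central q (n := n + 1)
      (Nat.lt_succ_iff.mp (mem_range.mp hm))).mul_left ((-1) ^ m * (m : R)) using 1
    ring
  have hlast : q ^ (n + 1) ∣ q ^ triangle ((n + 1 : ℕ) : ℤ) :=
    pow_dvd_pow q (by have := le_triangle ((n + 1 : ℕ) : ℤ); omega)
  have key : qPochhammer q (n + 1) * qPochhammer q n - c * jacobiCubeSum q (n + 1) =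
      -(-1) ^ n * (S₁ - c * S₀) -
        (-1) ^ n * c * (2 * (n + 1 : ℕ)) * q ^ triangle ((n + 1 : ℕ) : ℤ) := by
    linear_combination (-1) ^ n * hderiv - (-1) ^ n * c * hsum -
      (qPochhammer q (n + 1) * qPochhammer q n - c * jacobiCubeSum q (n + 1)) * hsq
  rw [key]
  exact dvd_sub (hcentral.mul_left _) (hlast.mul_left _)

end QAnalogues

section PowerSeries

variable {R : Type*} [CommRing R]

theorem constantCoeff_prod_one_sub_X_pow {s : Finset ℕ} (hs : 0 ∉ s) :
    constantCoeff (∏ t ∈ s, (1 - X ^ t : R⟦X⟧)) = 1 := by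
  rw [map_prod]
  refine prod_eq_one fun t ht => ?_
  simp [zero_pow (ne_of_mem_of_not_mem ht hs)]

theorem isUnit_qPochhammer_X (n : ℕ) : IsUnit (qPochhammer (X : R⟦X⟧) n) :=
  isUnit_iff_constantCoeff.mpr <| by
    rw [qPochhammer, constantCoeff_prod_one_sub_X_pow (by simp)]
    exact isUnit_one

theorem X_pow_dvd_qPochhammer_pow_three_sub_jacobiCubeSum (n : ℕ) :
    (X : R⟦X⟧) ^ (n + 1) ∣ qPochhammer X (n + 1) ^ 3 - jacobiCubeSum X (n + 1) := by
  have hJ := pow_dvd_qPochhammer_mul_sub_qBinom_mul_jacobiCubeSum (X : R⟦X⟧) n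
  have hM := qBinom_add_mul_qPochhammer (X : R⟦X⟧) (n + 1) (n + 1)
  have hP := pow_dvd_qPochhammer_sub (X : R⟦X⟧) (show n ≤ 2 * (n + 1) by omega)
  rw [show n + 1 + (n + 1) = 2 * (n + 1) by ring] at hM
  rw [← (isUnit_qPochhammer_X n).dvd_mul_right]
  have key : (qPochhammer X (n + 1) ^ 3 - jacobiCubeSum X (n + 1)) * qPochhammer (X : R⟦X⟧) n =
      qPochhammer X (n + 1) ^ 2 * (qPochhammer X (n + 1) * qPochhammer X n -
        qBinom X (2 * (n + 1)) (n + 1) * jacobiCubeSum X (n + 1)) +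
      jacobiCubeSum X (n + 1) * (qPochhammer X (2 * (n + 1)) - qPochhammer X n) := by
    linear_combination jacobiCubeSum (X : R⟦X⟧) (n + 1) * hM
  rw [key]
  exact dvd_add (hJ.mul_left _) (hP.mul_left _)

theorem coeff_qPochhammer_pow_six (n : ℕ) :
    coeff n (qPochhammer (X : R⟦X⟧) n ^ 6) = coeff n (jacobiCubeSum (X : R⟦X⟧) (n + 1) ^ 2) := by
  have h3 := X_pow_dvd_qPochhammer_pow_three_sub_jacobiCubeSum (R := R) n
  have hP := pow_dvd_qPochhammer_sub (X : R⟦X⟧) n.le_succ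
  have h6 : (X : R⟦X⟧) ^ (n + 1) ∣ qPochhammer X n ^ 6 - jacobiCubeSum X (n + 1) ^ 2 := by
    rw [show qPochhammer (X : R⟦X⟧) n ^ 6 - jacobiCubeSum X (n + 1) ^ 2 =
      (qPochhammer X n ^ 6 - qPochhammer X (n + 1) ^ 6) +
        (qPochhammer X (n + 1) ^ 3 - jacobiCubeSum X (n + 1)) *
          (qPochhammer X (n + 1) ^ 3 + jacobiCubeSum X (n + 1)) by ring]
    exact dvd_add ((dvd_sub_comm.mp hP).trans (sub_dvd_pow_sub_pow _ _ 6)) (h3.mul_right _)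
  rw [← sub_eq_zero, ← map_sub]
  exact X_pow_dvd_iff.mp h6 n n.lt_succ_self

theorem exists_triangle_eq_of_coeff_jacobiCubeSum_ne_zero {m k : ℕ}
    (h : coeff m (jacobiCubeSum (X : R⟦X⟧) k) ≠ 0) : ∃ j : ℕ, triangle j = m := by
  rw [jacobiCubeSum, map_sum] at h
  obtain ⟨j, -, hj⟩ := exists_ne_zero_of_sum_ne_zero h
  refine ⟨j, by_contra fun hne => hj ?_⟩
  rw [show ((-1 : R⟦X⟧) ^ j * (2 * j + 1)) = C ((-1 : R) ^ j * (2 * j + 1)) by simp [map_ofNat],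
    coeff_C_mul_X_pow, if_neg (Ne.symm hne)]

theorem coeff_jacobiCubeSum_sq_nine_mul_add_five (n k : ℕ) :
    coeff (9 * n + 5) (jacobiCubeSum (X : R⟦X⟧) k ^ 2) = 0 := by
  rw [sq, coeff_mul]
  refine sum_eq_zero fun p hp => by_contra fun h => ?_
  obtain ⟨j, hj⟩ := exists_triangle_eq_of_coeff_jacobiCubeSum_ne_zero (left_ne_zero_of_mul h)
  obtain ⟨l, hl⟩ := exists_triangle_eq_of_coeff_jacobiCubeSum_ne_zero (right_ne_zero_of_mul h)
  exact triangle_add_triangle_ne j l n (by rw [hj, hl]; exact mem_antidiagonal.mp hp)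

theorem map_prod_one_sub_X_pow_mul_invOfUnit (p : ℕ) [Fact p.Prime] {s : Finset ℕ} (hs : 0 ∉ s) :
    map (Int.castRingHom (ZMod p))
        ((∏ t ∈ s, (1 - X ^ (p * t))) * invOfUnit (∏ t ∈ s, (1 - X ^ t : ℤ⟦X⟧)) 1) =
      map (Int.castRingHom (ZMod p)) ((∏ t ∈ s, (1 - X ^ t : ℤ⟦X⟧)) ^ (p - 1)) := by
  have := charP_of_injective_ringHom (C_injective (R := ZMod p)) p
  set φ := map (Int.castRingHom (ZMod p))
  set P := ∏ t ∈ s, (1 - X ^ t : ℤ⟦X⟧)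
  have hfrob : φ (∏ t ∈ s, (1 - X ^ (p * t))) = φ P ^ p := by
    simp only [φ, P, map_prod, map_sub, map_one, map_pow, map_X, ← prod_pow]
    exact prod_congr rfl fun t _ => by rw [sub_pow_char, one_pow, ← pow_mul, mul_comm]
  have hinv : φ P * φ (invOfUnit P 1) = 1 := by
    rw [← map_mul, mul_invOfUnit P 1 (by rw [constantCoeff_prod_one_sub_X_pow hs, Units.val_one]),
      map_one]
  rw [map_mul, hfrob, map_pow, ← pow_sub_one_mul (Fact.out : p.Prime).ne_zero, mul_assoc, hinv,
    mul_one]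

end PowerSeries

/-- With `d` the coefficients of `∏_{t≥1}(1-q^{7 t})/(1-q^t)` (each coefficient computed
from sufficiently long truncations in `ℤ⟦X⟧`), we have `d(9 n + 5) ≡ 0 (mod 7)`. -/
theorem stmt10 (d : ℕ → ℤ)
    (hd : ∀ N : ℕ, d N =
      PowerSeries.coeff (R := ℤ) N
        ((∏ t ∈ Finset.Icc 1 N, (1 - (PowerSeries.X : PowerSeries ℤ) ^ (7 * t))) *
          PowerSeries.invOfUnit
            (∏ t ∈ Finset.Icc 1 N, (1 - (PowerSeries.X : PowerSeries ℤ) ^ t)) 1)) :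
    ∀ n : ℕ, (7 : ℤ) ∣ d (9 * n + 5) := by
  intro n
  have : Fact (Nat.Prime 7) := ⟨by norm_num⟩
  have h := congrArg (coeff (9 * n + 5))
    (map_prod_one_sub_X_pow_mul_invOfUnit 7 (s := Icc 1 (9 * n + 5)) (by simp))
  change _ = coeff _ (map _ (qPochhammer X (9 * n + 5) ^ 6)) at h
  rw [coeff_map, coeff_map, coeff_qPochhammer_pow_six, coeff_jacobiCubeSum_sq_nine_mul_add_five,
    map_zero, ← hd] at h
  exact (ZMod.intCast_zmod_eq_zero_iff_dvd _ 7).mp h
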